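/- arXiv:2602.05340 — 2 statements merged into one kernel-verified Lean document; each statement's English description precedes it below -/
import Mathlib

section
/- Suppose that for a cost vector ĉ ∈ ℝ^d, a compact convex set S ⊆ ℝ^d with diameter Δ(S), and a constant ν ≥ 0, one has the strong-optimality inequality ⟨ĉ, w − w*(ĉ)⟩ ≥ (ν/Δ(S)) ‖w − w*(ĉ)‖² for all w ∈ S, where w*(ĉ) minimizes ⟨ĉ, ·⟩ over S. If c₁, c₂ are two unit vectors (‖c₁‖ = ‖c₂‖ = 1) each satisfying this inequality with the same constant η > 0 (i.e., ⟨cᵢ, w − w*(cᵢ)⟩ ≥ (η/Δ(S))‖w − w*(cᵢ)‖² for all w ∈ S, i = 1, 2), then ‖w*(c₁) − w*(c₂)‖ ≤ (Δ(S)/(2η)) ‖c₁ − c₂‖. -/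
open RealInnerProductSpace

/-!
Evaluating each strong-optimality inequality at the other minimizer and adding the two gives
`2 (η / Δ) ‖w₁ - w₂‖² ≤ ⟪c₁ - c₂, w₂ - w₁⟫ ≤ ‖c₁ - c₂‖ ‖w₁ - w₂‖` by Cauchy–Schwarz; dividing
by `‖w₁ - w₂‖` gives the bound. When `Δ = 0` the hypotheses carry no information (`η / 0 = 0`),
but then `‖w₁ - w₂‖ ≤ Δ = 0`.
-/

section StrongOptimality

variable {E : Type*} [NormedAddCommGroup E] [InnerProductSpace ℝ E]

theorem mul_sq_norm_sub_le_inner_of_strong_optimality {a : ℝ} {c₁ c₂ w₁ w₂ : E}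
    (h₁ : a * ‖w₂ - w₁‖ ^ 2 ≤ ⟪c₁, w₂ - w₁⟫) (h₂ : a * ‖w₁ - w₂‖ ^ 2 ≤ ⟪c₂, w₁ - w₂⟫) :
    2 * a * ‖w₁ - w₂‖ ^ 2 ≤ ⟪c₁ - c₂, w₂ - w₁⟫ := by
  have hinner : ⟪c₁ - c₂, w₂ - w₁⟫ = ⟪c₁, w₂ - w₁⟫ + ⟪c₂, w₁ - w₂⟫ := by
    rw [inner_sub_left, ← neg_sub w₁ w₂, inner_neg_right, inner_neg_right]
    ring
  rw [norm_sub_rev] at h₁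
  linarith

theorem mul_norm_sub_le_norm_sub_of_strong_optimality {a : ℝ} {c₁ c₂ w₁ w₂ : E}
    (h₁ : a * ‖w₂ - w₁‖ ^ 2 ≤ ⟪c₁, w₂ - w₁⟫) (h₂ : a * ‖w₁ - w₂‖ ^ 2 ≤ ⟪c₂, w₁ - w₂⟫) :
    2 * a * ‖w₁ - w₂‖ ≤ ‖c₁ - c₂‖ := by
  rcases (norm_nonneg (w₁ - w₂)).eq_or_lt with hzero | hpos
  · rw [← hzero, mul_zero]
    exact norm_nonneg _
  have hcs : 2 * a * ‖w₁ - w₂‖ * ‖w₁ - w₂‖ ≤ ‖c₁ - c₂‖ * ‖w₁ - w₂‖ :=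
    calc 2 * a * ‖w₁ - w₂‖ * ‖w₁ - w₂‖ = 2 * a * ‖w₁ - w₂‖ ^ 2 := by ring
      _ ≤ ⟪c₁ - c₂, w₂ - w₁⟫ := mul_sq_norm_sub_le_inner_of_strong_optimality h₁ h₂
      _ ≤ ‖c₁ - c₂‖ * ‖w₂ - w₁‖ := real_inner_le_norm _ _
      _ = ‖c₁ - c₂‖ * ‖w₁ - w₂‖ := by rw [norm_sub_rev w₂]
  exact le_of_mul_le_mul_right hcs hpos

end StrongOptimality

theorem stmt_4_general {d : ℕ} (S : Set (EuclideanSpace ℝ (Fin d)))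
    (hScomp : IsCompact S)
    (wstar : EuclideanSpace ℝ (Fin d) → EuclideanSpace ℝ (Fin d))
    (hmem : ∀ c, wstar c ∈ S)
    (η : ℝ) (hη : 0 < η)
    (c₁ c₂ : EuclideanSpace ℝ (Fin d))
    (hstrong₁ : ∀ w ∈ S,
      (η / Metric.diam S) * ‖w - wstar c₁‖ ^ 2 ≤ ⟪c₁, w - wstar c₁⟫)
    (hstrong₂ : ∀ w ∈ S,
      (η / Metric.diam S) * ‖w - wstar c₂‖ ^ 2 ≤ ⟪c₂, w - wstar c₂⟫) :
    ‖wstar c₁ - wstar c₂‖ ≤ (Metric.diam S / (2 * η)) * ‖c₁ - c₂‖ := by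
  have hdiam : ‖wstar c₁ - wstar c₂‖ ≤ Metric.diam S := by
    rw [← dist_eq_norm]
    exact Metric.dist_le_diam_of_mem hScomp.isBounded (hmem c₁) (hmem c₂)
  have hkey : 2 * (η / Metric.diam S) * ‖wstar c₁ - wstar c₂‖ ≤ ‖c₁ - c₂‖ :=
    mul_norm_sub_le_norm_sub_of_strong_optimality (hstrong₁ _ (hmem c₂)) (hstrong₂ _ (hmem c₁))
  generalize Metric.diam S = Δ at hdiam hkey ⊢
  rcases ((norm_nonneg _).trans hdiam).eq_or_lt with hΔ | hΔ
  · rw [← hΔ] at hdiam ⊢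
    simpa using hdiam
  calc ‖wstar c₁ - wstar c₂‖
      = Δ / (2 * η) * (2 * (η / Δ) * ‖wstar c₁ - wstar c₂‖) := by field_simp
    _ ≤ Δ / (2 * η) * ‖c₁ - c₂‖ := by gcongr

/-- If two unit cost vectors both satisfy the strong-optimality inequality
with constant `η > 0` over the compact convex set `S`, then their minimizers
are `(diam S / (2η))`-Lipschitz-close. -/
theorem stmt_4 {d : ℕ} (S : Set (EuclideanSpace ℝ (Fin d)))
    (hS : S.Nonempty) (hScomp : IsCompact S) (hSconv : Convex ℝ S)
    (wstar : EuclideanSpace ℝ (Fin d) → EuclideanSpace ℝ (Fin d))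
    (hmem : ∀ c, wstar c ∈ S)
    (hmin : ∀ c, ∀ w ∈ S, ⟪c, wstar c⟫ ≤ ⟪c, w⟫)
    (η : ℝ) (hη : 0 < η)
    (c₁ c₂ : EuclideanSpace ℝ (Fin d)) (hc₁ : ‖c₁‖ = 1) (hc₂ : ‖c₂‖ = 1)
    (hstrong₁ : ∀ w ∈ S,
      (η / Metric.diam S) * ‖w - wstar c₁‖ ^ 2 ≤ ⟪c₁, w - wstar c₁⟫)
    (hstrong₂ : ∀ w ∈ S,
      (η / Metric.diam S) * ‖w - wstar c₂‖ ^ 2 ≤ ⟪c₂, w - wstar c₂⟫) :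
    ‖wstar c₁ - wstar c₂‖ ≤ (Metric.diam S / (2 * η)) * ‖c₁ - c₂‖ :=
  stmt_4_general S hScomp wstar hmem η hη c₁ c₂ hstrong₁ hstrong₂
end

section
/- Let S ⊆ ℝ^d be compact with diameter Δ(S), and let ĉ₁, ĉ₂ be nonzero vectors whose normalizations c̄ᵢ = ĉᵢ/‖ĉᵢ‖ satisfy the strong-optimality inequality ⟨c̄ᵢ, w − w*(c̄ᵢ)⟩ ≥ (η/Δ(S))‖w − w*(c̄ᵢ)‖² for all w ∈ S, with η > 0, and such that w*(ĉᵢ) = w*(c̄ᵢ). Then for any true cost vector c with ‖c‖ ≤ ρ, the SPO losses satisfy |ℓ(ĉ₁, c) − ℓ(ĉ₂, c)| ≤ (ρ · Δ(S) / (2η)) · ‖ĉ₁/‖ĉ₁‖ − ĉ₂/‖ĉ₂‖‖. -/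
open RealInnerProductSpace

/-- "Lipschitz-like" property of the SPO loss with respect to the directional
difference of the predictions. -/
theorem stmt_5 {d : ℕ} (S : Set (EuclideanSpace ℝ (Fin d)))
    (hS : S.Nonempty) (hScomp : IsCompact S)
    (wstar : EuclideanSpace ℝ (Fin d) → EuclideanSpace ℝ (Fin d))
    (hmem : ∀ c, wstar c ∈ S)
    (hmin : ∀ c, ∀ w ∈ S, ⟪c, wstar c⟫ ≤ ⟪c, w⟫)
    (η ρ : ℝ) (hη : 0 < η)
    (chat₁ chat₂ : EuclideanSpace ℝ (Fin d)) (hchat₁ : chat₁ ≠ 0) (hchat₂ : chat₂ ≠ 0)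
    (hstrong₁ : ∀ w ∈ S,
      (η / Metric.diam S) * ‖w - wstar (‖chat₁‖⁻¹ • chat₁)‖ ^ 2
        ≤ ⟪‖chat₁‖⁻¹ • chat₁, w - wstar (‖chat₁‖⁻¹ • chat₁)⟫)
    (hstrong₂ : ∀ w ∈ S,
      (η / Metric.diam S) * ‖w - wstar (‖chat₂‖⁻¹ • chat₂)‖ ^ 2
        ≤ ⟪‖chat₂‖⁻¹ • chat₂, w - wstar (‖chat₂‖⁻¹ • chat₂)⟫)
    (hscale₁ : wstar chat₁ = wstar (‖chat₁‖⁻¹ • chat₁))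
    (hscale₂ : wstar chat₂ = wstar (‖chat₂‖⁻¹ • chat₂))
    (c : EuclideanSpace ℝ (Fin d)) (hc : ‖c‖ ≤ ρ) :
    |(⟪c, wstar chat₁⟫ - ⟪c, wstar c⟫) - (⟪c, wstar chat₂⟫ - ⟪c, wstar c⟫)|
      ≤ (ρ * Metric.diam S / (2 * η)) * ‖‖chat₁‖⁻¹ • chat₁ - ‖chat₂‖⁻¹ • chat₂‖ := by
  set n1 := ‖chat₁‖⁻¹ • chat₁ with hn1
  set n2 := ‖chat₂‖⁻¹ • chat₂ with hn2
  set w1 := wstar n1 with hw1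
  set w2 := wstar n2 with hw2
  have hρ : 0 ≤ ρ := le_trans (norm_nonneg c) hc
  have hΔ : 0 ≤ Metric.diam S := Metric.diam_nonneg
  set Δ := Metric.diam S with hΔdef
  set t := ‖w1 - w2‖ with ht
  have htn : 0 ≤ t := norm_nonneg _
  have key : t ≤ Δ / (2 * η) * ‖n1 - n2‖ := by
    rcases eq_or_lt_of_le hΔ with hΔ0 | hΔpos
    · -- diameter zero: w1 = w2
      have : dist w1 w2 ≤ Δ := Metric.dist_le_diam_of_mem hScomp.isBounded (hmem _) (hmem _)
      have ht0 : t = 0 := by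
        have := dist_nonneg (x := w1) (y := w2)
        rw [dist_eq_norm] at *
        linarith
      rw [ht0]
      positivity
    · have h1 := hstrong₁ w2 (hmem _)
      have h2 := hstrong₂ w1 (hmem _)
      have hsym : ‖w2 - w1‖ = t := by rw [ht, norm_sub_rev]
      have hsum : (2 * η / Δ) * t ^ 2 ≤ ⟪n1 - n2, w2 - w1⟫ := by
        rw [inner_sub_left]
        have e2 : ⟪n2, w1 - w2⟫ = -⟪n2, w2 - w1⟫ := by
          rw [← inner_neg_right]; congr 1; abel
        rw [hsym] at h1
        rw [e2] at h2
        have : η / Δ * t ^ 2 + η / Δ * t ^ 2 ≤ ⟪n1, w2 - w1⟫ - ⟪n2, w2 - w1⟫ := by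
          rw [← ht] at h2
          linarith
        calc (2 * η / Δ) * t ^ 2 = η / Δ * t ^ 2 + η / Δ * t ^ 2 := by ring
          _ ≤ _ := this
      have hcs : ⟪n1 - n2, w2 - w1⟫ ≤ ‖n1 - n2‖ * t := by
        rw [← hsym]
        exact real_inner_le_norm _ _
      have hN : 0 ≤ ‖n1 - n2‖ := norm_nonneg _
      rcases eq_or_lt_of_le htn with ht0 | htpos
      · rw [← ht0]; positivity
      · have h3 : (2 * η / Δ) * t ^ 2 ≤ ‖n1 - n2‖ * t := le_trans hsum hcs
        rw [div_mul_eq_mul_div] at h3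
        have h4 : 2 * η * t ^ 2 ≤ ‖n1 - n2‖ * t * Δ := (div_le_iff₀ hΔpos).mp h3
        rw [div_mul_eq_mul_div, le_div_iff₀ (by positivity)]
        nlinarith [htpos]
  have lhs_eq : |(⟪c, wstar chat₁⟫ - ⟪c, wstar c⟫) - (⟪c, wstar chat₂⟫ - ⟪c, wstar c⟫)|
      = |⟪c, w1 - w2⟫| := by
    rw [hscale₁, hscale₂, inner_sub_right]
    ring_nf
  rw [lhs_eq]
  calc |⟪c, w1 - w2⟫| ≤ ‖c‖ * t := abs_real_inner_le_norm _ _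
    _ ≤ ρ * (Δ / (2 * η) * ‖n1 - n2‖) :=
        mul_le_mul hc key htn hρ
    _ = (ρ * Δ / (2 * η)) * ‖n1 - n2‖ := by ring
end
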